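/- If G₁ is r₁-regular with n₁ vertices and m₁ edges and G₂ is r₂-regular with n₂ vertices and m₂ edges, then EU(G₁+G₂) = √3·m₁·(r₁+n₂) + √3·m₂·(r₂+n₁) + n₁n₂·√((r₁+n₂)² + (r₂+n₁)² + (r₁+n₂)(r₂+n₁)). -/

import Mathlib

open Finset SimpleGraph
open scoped Classical

noncomputable def ESO {V : Type*} [Fintype V] (G : SimpleGraph V) : Real :=
  Finset.sum G.edgeSet.toFinset fun e =>
    Sym2.lift ⟨fun u v => ((G.degree u : Real) + (G.degree v : Real)) *
        Real.sqrt ((G.degree u : Real) ^ 2 + (G.degree v : Real) ^ 2),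
      fun u v => by
        dsimp only; rw [add_comm (G.degree u : Real), add_comm ((G.degree u : Real) ^ 2)]⟩ e

noncomputable def EU {V : Type*} [Fintype V] (G : SimpleGraph V) : Real :=
  Finset.sum G.edgeSet.toFinset fun e =>
    Sym2.lift ⟨fun u v => Real.sqrt ((G.degree u : Real) ^ 2 + (G.degree v : Real) ^ 2 +
        (G.degree u : Real) * (G.degree v : Real)),
      fun u v => by
        dsimp only; rw [mul_comm (G.degree u : Real), add_comm ((G.degree u : Real) ^ 2)]⟩ e

noncomputable def edgeCount {V : Type*} [Fintype V] (G : SimpleGraph V) : Nat :=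
  G.edgeSet.toFinset.card

def graphJoin {V1 V2 : Type*} (G1 : SimpleGraph V1) (G2 : SimpleGraph V2) :
    SimpleGraph (V1 ⊕ V2) where
  Adj x y :=
    match x, y with
    | Sum.inl a, Sum.inl b => G1.Adj a b
    | Sum.inr a, Sum.inr b => G2.Adj a b
    | Sum.inl _, Sum.inr _ => True
    | Sum.inr _, Sum.inl _ => True
  symm := by
    constructor
    rintro (a | a) (b | b) h
    · exact G1.adj_symm h
    · trivial
    · trivial
    · exact G2.adj_symm h
  loopless := by
    constructor
    rintro (a | a) h
    · exact (G1.ne_of_adj h) rfl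
    · exact (G2.ne_of_adj h) rfl

/-!
Every edge of `G1 + G2` is a copy of an edge of `G1`, a copy of an edge of `G2`, or one of the
`n1 * n2` edges between the two parts. In the join every vertex of `G1` has degree `r1 + n2` and
every vertex of `G2` has degree `r2 + n1`, so the summand of `EU` is constant on each class:
`√3 (r1 + n2)`, `√3 (r2 + n1)` and `√((r1 + n2)² + (r2 + n1)² + (r1 + n2)(r2 + n1))`.
-/

section GraphJoin

variable {V1 V2 : Type*} (G1 : SimpleGraph V1) (G2 : SimpleGraph V2)

@[simp] theorem graphJoin_adj_inl_inl {a b : V1} :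
    (graphJoin G1 G2).Adj (.inl a) (.inl b) ↔ G1.Adj a b := Iff.rfl

@[simp] theorem graphJoin_adj_inr_inr {a b : V2} :
    (graphJoin G1 G2).Adj (.inr a) (.inr b) ↔ G2.Adj a b := Iff.rfl

@[simp] theorem graphJoin_adj_inl_inr {a : V1} {b : V2} :
    (graphJoin G1 G2).Adj (.inl a) (.inr b) := trivial

@[simp] theorem graphJoin_adj_inr_inl {a : V2} {b : V1} :
    (graphJoin G1 G2).Adj (.inr a) (.inl b) := trivial

theorem graphJoin_eq_sup :
    graphJoin G1 G2 =
      G1.map (Function.Embedding.inl : V1 ↪ V1 ⊕ V2) ⊔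
        G2.map (Function.Embedding.inr : V2 ↪ V1 ⊕ V2) ⊔ completeBipartiteGraph V1 V2 := by
  ext (a | a) (b | b) <;> simp

@[simps]
def crossEdge : V1 × V2 ↪ Sym2 (V1 ⊕ V2) where
  toFun p := s(.inl p.1, .inr p.2)
  inj' := by
    rintro ⟨a, b⟩ ⟨a', b'⟩ h
    simpa using h

variable [Fintype V1] [Fintype V2]

theorem edgeFinset_completeBipartiteGraph :
    (completeBipartiteGraph V1 V2).edgeFinset = univ.map crossEdge := by
  ext e
  induction e using Sym2.ind with
  | h x y => rcases x with a | a <;> rcases y with b | b <;> simp [Sym2.eq_swap]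

theorem sum_edgeFinset_graphJoin {M : Type*} [AddCommMonoid M] (f : Sym2 (V1 ⊕ V2) → M) :
    ∑ e ∈ (graphJoin G1 G2).edgeFinset, f e =
      ∑ e ∈ G1.edgeFinset, f (e.map .inl) + ∑ e ∈ G2.edgeFinset, f (e.map .inr) +
        ∑ p : V1 × V2, f s(.inl p.1, .inr p.2) := by
  rw [graphJoin_eq_sup]
  simp only [edgeFinset_sup]
  rw [sum_union (disjoint_union_left.2 ⟨?_, ?_⟩), sum_union ?_, edgeFinset_map, edgeFinset_map,
    edgeFinset_completeBipartiteGraph, sum_map, sum_map, sum_map]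
  · rfl
  all_goals
    refine disjoint_edgeFinset.2 (SimpleGraph.disjoint_left.2 ?_)
    rintro (a | a) (b | b) <;> simp

theorem neighborFinset_graphJoin_inl (a : V1) :
    (graphJoin G1 G2).neighborFinset (.inl a) = (G1.neighborFinset a).disjSum univ := by
  ext (b | b) <;> simp

theorem neighborFinset_graphJoin_inr (b : V2) :
    (graphJoin G1 G2).neighborFinset (.inr b) = univ.disjSum (G2.neighborFinset b) := by
  ext (a | a) <;> simp

theorem degree_graphJoin_inl (a : V1) :
    (graphJoin G1 G2).degree (.inl a) = G1.degree a + Fintype.card V2 := by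
  rw [← card_neighborFinset_eq_degree, neighborFinset_graphJoin_inl, card_disjSum, card_univ,
    card_neighborFinset_eq_degree]

theorem degree_graphJoin_inr (b : V2) :
    (graphJoin G1 G2).degree (.inr b) = G2.degree b + Fintype.card V1 := by
  rw [← card_neighborFinset_eq_degree, neighborFinset_graphJoin_inr, card_disjSum, card_univ,
    card_neighborFinset_eq_degree, add_comm]

end GraphJoin

theorem Real.sqrt_sq_add_sq_add_mul_self {x : ℝ} (hx : 0 ≤ x) :
    √(x ^ 2 + x ^ 2 + x * x) = √3 * x := by
  rw [show x ^ 2 + x ^ 2 + x * x = 3 * x ^ 2 by ring, Real.sqrt_mul (by norm_num), Real.sqrt_sq hx]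

theorem eu_join_regular {V1 V2 : Type*} [Fintype V1] [Fintype V2]
    (G1 : SimpleGraph V1) (G2 : SimpleGraph V2) (r1 r2 : Nat)
    (h1 : G1.IsRegularOfDegree r1) (h2 : G2.IsRegularOfDegree r2) :
    EU (graphJoin G1 G2) =
      Real.sqrt 3 * (edgeCount G1 : Real) * ((r1 : Real) + Fintype.card V2) +
      Real.sqrt 3 * (edgeCount G2 : Real) * ((r2 : Real) + Fintype.card V1) +
      (Fintype.card V1 : Real) * (Fintype.card V2 : Real) *
        Real.sqrt (((r1 : Real) + Fintype.card V2) ^ 2 + ((r2 : Real) + Fintype.card V1) ^ 2 +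
          ((r1 : Real) + Fintype.card V2) * ((r2 : Real) + Fintype.card V1)) := by
  set R1 : ℝ := r1 + Fintype.card V2
  set R2 : ℝ := r2 + Fintype.card V1
  have degree_inl (a : V1) : ((graphJoin G1 G2).degree (.inl a) : ℝ) = R1 := by
    simp [degree_graphJoin_inl, h1 a, R1]
  have degree_inr (b : V2) : ((graphJoin G1 G2).degree (.inr b) : ℝ) = R2 := by
    simp [degree_graphJoin_inr, h2 b, R2]
  rw [EU, ← edgeFinset, sum_edgeFinset_graphJoin, sum_eq_card_nsmul (b := √3 * R1),
    sum_eq_card_nsmul (b := √3 * R2), sum_eq_card_nsmul (b := √(R1 ^ 2 + R2 ^ 2 + R1 * R2))]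
  · rw [edgeCount, edgeCount, ← edgeFinset, ← edgeFinset]
    simp only [nsmul_eq_mul, card_univ, Fintype.card_prod]
    push_cast
    ring
  · rintro ⟨a, b⟩ -
    simp [degree_inl, degree_inr]
  · intro e _
    induction e using Sym2.ind
    simp [degree_inr, Real.sqrt_sq_add_sq_add_mul_self (by positivity : (0 : ℝ) ≤ R2)]
  · intro e _
    induction e using Sym2.ind
    simp [degree_inl, Real.sqrt_sq_add_sq_add_mul_self (by positivity : (0 : ℝ) ≤ R1)]
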